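/- arXiv:1903.10037 — 3 statements merged into one kernel-verified Lean document; each statement's English description precedes it below -/
import Mathlib

section
/- Fix i₀ ∈ V. If β, β′ ∈ D_V^W satisfy β_i = β′_i for all i ∈ V∖{i₀}, then for every i ∈ V: (H_β^{-1})(i,i₀)/(H_β^{-1})(i₀,i₀) = (H_{β′}^{-1})(i,i₀)/(H_{β′}^{-1})(i₀,i₀). -/
open MeasureTheory Matrix

noncomputable section

/-- The Schrödinger operator `H_β = 2·diag(β) − W`. -/
def Hmat {V : Type*} [Fintype V] [DecidableEq V] (W : Matrix V V ℝ) (β : V → ℝ) :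
    Matrix V V ℝ :=
  2 • Matrix.diagonal β - W

/-- Density of the measure `ν_V^{W,η}` with respect to Lebesgue measure. -/
def nuDens {V : Type*} [Fintype V] [DecidableEq V] (W : Matrix V V ℝ) (η : V → ℝ)
    (β : V → ℝ) : ENNReal :=
  Set.indicator {β : V → ℝ | (Hmat W β).PosDef}
    (fun β => ENNReal.ofReal
      ((2 / Real.pi) ^ ((Fintype.card V : ℝ) / 2) *
        Real.exp (-(1 / 2) * ((1 : V → ℝ) ⬝ᵥ (Hmat W β).mulVec 1
            + η ⬝ᵥ (Hmat W β)⁻¹.mulVec η) + η ⬝ᵥ (1 : V → ℝ)) /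
        Real.sqrt (Hmat W β).det)) β

/-- The measure `ν_V^{W,η}`. -/
def nuMeas {V : Type*} [Fintype V] [DecidableEq V] (W : Matrix V V ℝ) (η : V → ℝ) :
    Measure (V → ℝ) :=
  volume.withDensity (nuDens W η)

/-- The graph on `V` with an edge `{i,j}` whenever `W i j > 0`. -/
def graphOf {V : Type*} (W : Matrix V V ℝ) : SimpleGraph V :=
  SimpleGraph.fromRel (fun i j => 0 < W i j)


theorem stmt6 {V : Type*} [Fintype V] [DecidableEq V] [Nonempty V]
    (W : Matrix V V ℝ) (hsymm : W.IsSymm) (hnn : ∀ i j, 0 ≤ W i j)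
    (hdiag : ∀ i, W i i = 0) (hconn : (graphOf W).Connected)
    (i₀ : V) (β β' : V → ℝ)
    (hβ : (Hmat W β).PosDef) (hβ' : (Hmat W β').PosDef)
    (hagree : ∀ i, i ≠ i₀ → β i = β' i) (i : V) :
    (Hmat W β)⁻¹ i i₀ / (Hmat W β)⁻¹ i₀ i₀
      = (Hmat W β')⁻¹ i i₀ / (Hmat W β')⁻¹ i₀ i₀ := by
  have hrow : ∀ v : V → ℝ, (Hmat W β).updateRow i₀ v = (Hmat W β').updateRow i₀ v := by
    intro v
    ext a b
    by_cases ha : a = i₀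
    · simp [Matrix.updateRow_apply, ha]
    · rw [Matrix.updateRow_apply, Matrix.updateRow_apply, if_neg ha, if_neg ha]
      simp only [Hmat, Matrix.sub_apply, Matrix.smul_apply, Matrix.diagonal_apply]
      by_cases hab : a = b
      · simp [hab, hagree b (hab ▸ ha)]
      · simp [hab]
  have key : ∀ j, (Hmat W β).adjugate j i₀ = (Hmat W β').adjugate j i₀ := by
    intro j
    rw [Matrix.adjugate_apply, Matrix.adjugate_apply, hrow]
  have hd : (Hmat W β).det ≠ 0 := ne_of_gt hβ.det_pos
  have hd' : (Hmat W β').det ≠ 0 := ne_of_gt hβ'.det_pos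
  have hinv : ∀ a b : V, (Hmat W β)⁻¹ a b = (Hmat W β).det⁻¹ * (Hmat W β).adjugate a b := by
    intro a b
    rw [Matrix.inv_def, Ring.inverse_eq_inv]
    simp [Matrix.smul_apply]
  have hinv' : ∀ a b : V, (Hmat W β')⁻¹ a b = (Hmat W β').det⁻¹ * (Hmat W β').adjugate a b := by
    intro a b
    rw [Matrix.inv_def, Ring.inverse_eq_inv]
    simp [Matrix.smul_apply]
  rw [hinv, hinv, hinv', hinv', key i, key i₀,
    mul_div_mul_left _ _ (inv_ne_zero hd), mul_div_mul_left _ _ (inv_ne_zero hd')]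

end
end

section
/- Let β ∈ D_V^W. For all i,j ∈ V, the sum Σ_σ w(σ) over all walks σ from i to j, taken in [0,∞], equals (H_β^{-1})(i,j); in particular this sum is finite. More generally, for any nonempty U ⊆ V and i,j ∈ U, the sum of w(σ) over all walks from i to j whose vertices all lie in U equals ((H_β)_{U,U})^{-1}(i,j), where (H_β)_{U,U} is the principal submatrix of H_β indexed by U (which is positive definite). -/
open MeasureTheory Matrix

noncomputable section

/-- `σ` is a walk from `i` to `j` (with respect to the weights `W`): a nonempty finite
sequence of vertices starting at `i`, ending at `j`, with consecutive vertices joined by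
an edge of positive weight. -/
def IsWalkBtw {V : Type*} (W : V → V → ℝ) (i j : V) (σ : List V) : Prop :=
  σ.head? = some i ∧ σ.getLast? = some j ∧ σ.Chain' (fun a b => 0 < W a b)

/-- The weight `w(σ) = (∏ W_{σ_k σ_{k+1}}) / (∏ 2 β_{σ_k})` of a walk. -/
def walkWeight {V : Type*} (W : V → V → ℝ) (β : V → ℝ) (σ : List V) : ℝ :=
  ((σ.zip σ.tail).map fun p => W p.1 p.2).prod / (σ.map fun v => 2 * β v).prod


namespace WalkProof
set_option linter.unusedSectionVars false
set_option linter.unusedVariables false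
open Filter Finset


variable {n : Type*} [Fintype n] [DecidableEq n]

lemma hmat_eq (W : Matrix n n ℝ) (β : n → ℝ) :
    Hmat W β = diagonal (fun v => 2 * β v) - W := by
  unfold Hmat
  congr 1
  ext a b
  by_cases h : a = b <;>
    simp [Matrix.smul_apply, Matrix.diagonal_apply, h, nsmul_eq_mul]

lemma beta_pos {W : Matrix n n ℝ} {β : n → ℝ} (hdiag : ∀ i, W i i = 0)
    (hβ : (Hmat W β).PosDef) (i : n) : 0 < β i := by
  have h := hβ.dotProduct_mulVec_pos (x := Pi.single i 1) (by
    intro h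
    have := congrFun h i
    simp [Pi.single_apply] at this)
  rw [star_trivial] at h
  have hform : (Pi.single i 1 : n → ℝ) ⬝ᵥ (Hmat W β *ᵥ Pi.single i 1) = Hmat W β i i := by
    simp [dotProduct, Matrix.mulVec, Pi.single_apply, Finset.sum_ite_eq,
      Finset.sum_ite_eq', dotProduct]
  rw [hform, hmat_eq] at h
  simp [Matrix.sub_apply, Matrix.diagonal_apply, hdiag i] at h
  linarith

lemma posdef_plus {W : Matrix n n ℝ} {β : n → ℝ} (hsymm : W.IsSymm)
    (hnn : ∀ i j, 0 ≤ W i j) (hβ : (Hmat W β).PosDef) :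
    (diagonal (fun v => 2 * β v) + W).PosDef := by
  have hWh : Wᴴ = W := by
    rw [conjTranspose_eq_transpose_of_trivial]; exact hsymm
  refine posDef_iff_dotProduct_mulVec.mpr ⟨?_, ?_⟩
  · show _ = _
    rw [conjTranspose_add, hWh, diagonal_conjTranspose, star_trivial]
  · intro x hx
    rw [star_trivial]
    set y : n → ℝ := fun v => |x v| with hy
    have hy0 : y ≠ 0 := by
      intro h
      apply hx
      ext v
      have := congrFun h v
      simpa [hy, abs_eq_zero] using this
    have h := hβ.dotProduct_mulVec_pos hy0
    rw [star_trivial, hmat_eq] at h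
    have expand : ∀ (A : Matrix n n ℝ) (v : n → ℝ),
        v ⬝ᵥ (A *ᵥ v) = ∑ a, ∑ b, v a * (A a b * v b) := by
      intro A v
      simp [dotProduct, Matrix.mulVec, Finset.mul_sum]
    rw [expand] at h
    rw [expand]
    refine lt_of_lt_of_le h ?_
    refine Finset.sum_le_sum fun a _ => Finset.sum_le_sum fun b _ => ?_
    show y a * (((diagonal fun v => 2 * β v) - W) a b * y b)
        ≤ x a * (((diagonal fun v => 2 * β v) + W) a b * x b)
    by_cases hab : a = b
    · subst hab
      simp only [Matrix.sub_apply, Matrix.add_apply, Matrix.diagonal_apply, if_pos rfl,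
        if_true, hy]
      have e1 : |x a| * ((2 * β a - W a a) * |x a|) = (2 * β a - W a a) * (x a * x a) := by
        rw [show |x a| * ((2 * β a - W a a) * |x a|)
            = (2 * β a - W a a) * (|x a| * |x a|) by ring, abs_mul_abs_self]
      rw [e1]
      nlinarith [hnn a a, mul_self_nonneg (x a)]
    · simp only [Matrix.sub_apply, Matrix.add_apply, Matrix.diagonal_apply, if_neg hab,
        zero_sub, zero_add, hy]
      have e1 : |x a| * (-W a b * |x b|) = -(W a b * |x a * x b|) := by
        rw [abs_mul]; ring
      have e2 : -(W a b * |x a * x b|) ≤ W a b * (x a * x b) := by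
        have := mul_le_mul_of_nonneg_left (neg_abs_le (x a * x b)) (hnn a b)
        linarith
      have e3 : x a * (W a b * x b) = W a b * (x a * x b) := by ring
      linarith
lemma posdef_conj {A : Matrix n n ℝ} (hA : A.PosDef) (d : n → ℝ) (hd : ∀ i, d i ≠ 0) :
    (diagonal d * A * diagonal d).PosDef := by
  have hAh : Aᴴ = A := hA.1
  refine posDef_iff_dotProduct_mulVec.mpr ⟨?_, ?_⟩
  · show _ = _
    rw [conjTranspose_mul, conjTranspose_mul, hAh, diagonal_conjTranspose, star_trivial,
      Matrix.mul_assoc]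
  · intro x hx
    set y : n → ℝ := fun v => d v * x v with hy
    have hy0 : y ≠ 0 := by
      intro h
      apply hx
      ext v
      have := congrFun h v
      simp only [hy, Pi.zero_apply] at this
      exact (mul_eq_zero.mp this).resolve_left (hd v)
    have h := hA.dotProduct_mulVec_pos hy0
    rw [star_trivial] at h ⊢
    have : x ⬝ᵥ ((diagonal d * A * diagonal d) *ᵥ x) = y ⬝ᵥ (A *ᵥ y) := by
      simp only [dotProduct, Matrix.mulVec, Matrix.mul_apply, Matrix.diagonal_apply, hy]
      simp [Finset.sum_ite_eq, Finset.sum_ite_eq', Finset.mul_sum, Finset.sum_mul, dotProduct]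
      refine Finset.sum_congr rfl fun a _ => Finset.sum_congr rfl fun b _ => by ring
    rw [this]
    exact h

lemma mul_eq_one_pow_conj {P Q M : Matrix n n ℝ} (hPQ : P * Q = 1) (hQP : Q * P = 1) (N : ℕ) :
    (Q * M * P) ^ N = Q * M ^ N * P := by
  induction N with
  | zero => simp [hQP]
  | succ k ih =>
      rw [pow_succ, ih, pow_succ]
      calc Q * M ^ k * P * (Q * M * P) = Q * M ^ k * (P * Q) * M * P := by
            simp only [Matrix.mul_assoc]
        _ = Q * (M ^ k * M) * P := by rw [hPQ, Matrix.mul_one]; simp only [Matrix.mul_assoc]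
lemma tendsto_pow_entry (M : Matrix n n ℝ) (hM : M.IsHermitian)
    (h1 : (1 - M).PosDef) (h2 : (1 + M).PosDef) (i j : n) :
    Tendsto (fun N => (M ^ N) i j) atTop (nhds 0) := by
  have habs : ∀ k, |hM.eigenvalues k| < 1 := by
    intro k
    set v : n → ℝ := ⇑(hM.eigenvectorBasis k) with hv
    have hv0 : v ≠ 0 := by
      intro h
      apply hM.eigenvectorBasis.orthonormal.ne_zero k
      ext l
      exact congrFun h l
    have hvv : 0 < v ⬝ᵥ v := by
      rcases (Finset.sum_nonneg fun l _ => mul_self_nonneg (v l)).lt_or_eq with h | h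
      · exact h
      · exact absurd (dotProduct_self_eq_zero.mp h.symm) hv0
    have hMv : M *ᵥ v = hM.eigenvalues k • v := hM.mulVec_eigenvectorBasis k
    have ha := h1.dotProduct_mulVec_pos hv0
    have hb := h2.dotProduct_mulVec_pos hv0
    rw [star_trivial, Matrix.sub_mulVec, Matrix.one_mulVec, hMv, dotProduct_sub,
      dotProduct_smul, smul_eq_mul] at ha
    rw [star_trivial, Matrix.add_mulVec, Matrix.one_mulVec, hMv, dotProduct_add,
      dotProduct_smul, smul_eq_mul] at hb
    rw [abs_lt]
    constructor
    · nlinarith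
    · nlinarith
  have hU2 := hM.eigenvectorUnitary.2
  rw [Matrix.mem_unitaryGroup_iff'] at hU2
  have hU1 := hM.eigenvectorUnitary.2
  rw [Matrix.mem_unitaryGroup_iff] at hU1
  set U : Matrix n n ℝ := (hM.eigenvectorUnitary : Matrix n n ℝ) with hUdef
  have hspec : M = U * diagonal hM.eigenvalues * star U := by
    have := hM.spectral_theorem
    simpa using this
  have hpow : ∀ N, M ^ N = U * diagonal (fun k => hM.eigenvalues k ^ N) * star U := by
    intro N
    have e : M ^ N = (U * diagonal hM.eigenvalues * star U) ^ N := by rw [← hspec]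
    rw [e, mul_eq_one_pow_conj hU2 hU1 N, Matrix.diagonal_pow]
    rfl
  have hentry : ∀ N, (M ^ N) i j = ∑ k, U i k * hM.eigenvalues k ^ N * U j k := by
    intro N
    rw [hpow N, Matrix.mul_apply]
    refine Finset.sum_congr rfl fun k _ => ?_
    rw [Matrix.mul_diagonal]
    simp [Matrix.star_apply, mul_comm, mul_assoc, mul_left_comm]
  simp only [hentry]
  have : Tendsto (fun N => ∑ k, U i k * hM.eigenvalues k ^ N * U j k) atTop
      (nhds (∑ k : n, 0)) := by
    refine tendsto_finset_sum _ fun k _ => ?_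
    have := (tendsto_pow_atTop_nhds_zero_of_abs_lt_one (habs k)).const_mul (U i k)
    have := this.mul_const (U j k)
    simpa using this
  simpa using this

set_option linter.unusedSectionVars false
variable {n : Type*} [Fintype n] [DecidableEq n]

lemma ww_nonneg (W : n → n → ℝ) (β : n → ℝ) (hnn : ∀ a b, 0 ≤ W a b)
    (hb : ∀ v, 0 < β v) (l : List n) : 0 ≤ walkWeight W β l := by
  apply div_nonneg
  · apply List.prod_nonneg
    intro x hx
    rcases List.mem_map.mp hx with ⟨p, _, rfl⟩
    exact hnn _ _
  · apply le_of_lt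
    apply List.prod_pos
    intro x hx
    rcases List.mem_map.mp hx with ⟨v, _, rfl⟩
    have := hb v
    linarith

lemma ww_single (W : n → n → ℝ) (β : n → ℝ) (v : n) :
    walkWeight W β [v] = (2 * β v)⁻¹ := by
  simp [walkWeight]

lemma ww_cons (W : n → n → ℝ) (β : n → ℝ) (a b : n) (l : List n) :
    walkWeight W β (a :: b :: l) = W a b / (2 * β a) * walkWeight W β (b :: l) := by
  unfold walkWeight
  simp only [List.tail_cons, List.zip_cons_cons, List.map_cons, List.prod_cons]
  rw [mul_div_mul_comm]

lemma prod_zero_of_not_chain (W : n → n → ℝ) (hnn : ∀ a b, 0 ≤ W a b) :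
    ∀ l : List n, ¬ l.Chain' (fun a b => 0 < W a b) →
      ((l.zip l.tail).map fun p => W p.1 p.2).prod = 0
  | [], h => absurd List.isChain_nil h
  | [a], h => absurd (List.isChain_singleton a) h
  | a :: b :: t, h => by
      by_cases hab : 0 < W a b
      · have ht : ¬ (b :: t).Chain' (fun a b => 0 < W a b) := fun hc =>
          h (List.isChain_cons_cons.mpr ⟨hab, hc⟩)
        simp only [List.tail_cons, List.zip_cons_cons, List.map_cons, List.prod_cons]
        have := prod_zero_of_not_chain W hnn (b :: t) ht
        simp only [List.tail_cons] at this
        rw [this, mul_zero]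
      · have h0 : W a b = 0 := le_antisymm (not_lt.mp hab) (hnn a b)
        simp [List.zip_cons_cons, h0]

lemma ww_map {m : Type*} (W' : m → m → ℝ) (W : n → n → ℝ) (β' : m → ℝ) (β : n → ℝ)
    (f : m → n) (hW : ∀ a b, W' a b = W (f a) (f b)) (hβ : ∀ a, β' a = β (f a))
    (l : List m) : walkWeight W' β' l = walkWeight W β (l.map f) := by
  unfold walkWeight
  have ht : (l.map f).tail = l.tail.map f := by
    cases l <;> simp
  rw [ht, List.zip_map, List.map_map, List.map_map]
  have e1 : ((fun p : n × n => W p.1 p.2) ∘ Prod.map f f) = fun p : m × m => W' p.1 p.2 := by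
    funext p
    simp [Prod.map, hW]
  have e2 : ((fun v : n => 2 * β v) ∘ f) = fun v : m => 2 * β' v := by
    funext v
    simp [hβ]
  rw [e1, e2]

lemma sum_ite_and_left {P : Prop} [Decidable P] (f : n → ℝ) (i : n) :
    (∑ v, if v = i ∧ P then f v else 0) = if P then f i else 0 := by
  by_cases hP : P
  · simp only [hP, and_true]
    rw [Finset.sum_ite_eq' Finset.univ i f]
    simp
  · simp [hP]

lemma sum_ite_and_right {P : Prop} [Decidable P] (f : n → ℝ) (i : n) :
    (∑ v, if i = v ∧ P then f v else 0) = if P then f i else 0 := by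
  by_cases hP : P
  · simp only [hP, and_true]
    rw [Finset.sum_ite_eq Finset.univ i f]
    simp
  · simp [hP]


variable {n : Type*} [Fintype n] [DecidableEq n]

def Dinv (β : n → ℝ) : Matrix n n ℝ := diagonal (fun v => (2 * β v)⁻¹)

def Ktil (W : Matrix n n ℝ) (β : n → ℝ) : Matrix n n ℝ := Dinv β * W

def Fsum (W : Matrix n n ℝ) (β : n → ℝ) (j : n) (m : ℕ) (i : n) : ℝ :=
  ∑ σ : Fin (m + 1) → n,
    if σ 0 = i ∧ σ (Fin.last m) = j then walkWeight (fun a b => W a b) β (List.ofFn σ)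
    else 0

lemma Fsum_eq (W : Matrix n n ℝ) (β : n → ℝ) (hb : ∀ v, 0 < β v) (j : n) :
    ∀ (m : ℕ) (i : n), Fsum W β j m i = ((Ktil W β) ^ m * Dinv β) i j := by
  intro m
  induction m with
  | zero =>
      intro i
      rw [pow_zero, Matrix.one_mul]
      unfold Fsum
      rw [← Equiv.sum_comp (Equiv.funUnique (Fin 1) n).symm
        (fun σ : Fin 1 → n => if σ 0 = i ∧ σ (Fin.last 0) = j
          then walkWeight (fun a b => W a b) β (List.ofFn σ) else 0)]
      have e1 : ∀ v : n,
          (if ((Equiv.funUnique (Fin 1) n).symm v) 0 = i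
              ∧ ((Equiv.funUnique (Fin 1) n).symm v) (Fin.last 0) = j
            then walkWeight (fun a b => W a b) β
              (List.ofFn ((Equiv.funUnique (Fin 1) n).symm v)) else 0)
          = if v = i then (if i = j then (2 * β i)⁻¹ else 0) else 0 := by
        intro v
        have hofn : List.ofFn ((Equiv.funUnique (Fin 1) n).symm v) = [v] := by
          simp [List.ofFn_succ]
        by_cases h1 : v = i <;> by_cases h2 : v = j
        · subst h1; subst h2
          simp [hofn, ww_single]
        · subst h1
          simp [h2, hofn]
        · subst h2
          simp [h1, hofn]
        · simp [h1, h2, hofn]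
      rw [Finset.sum_congr rfl fun v _ => e1 v, Finset.sum_ite_eq' Finset.univ i]
      simp [Dinv, Matrix.diagonal_apply]
  | succ m ih =>
      intro i
      have hrhs : ((Ktil W β) ^ (m + 1) * Dinv β) i j
          = ∑ v, Ktil W β i v * Fsum W β j m v := by
        rw [pow_succ', Matrix.mul_assoc, Matrix.mul_apply]
        exact Finset.sum_congr rfl fun v _ => by rw [ih v]
      rw [hrhs]
      unfold Fsum
      rw [← Equiv.sum_comp (Fin.consEquiv (fun _ : Fin (m + 2) => n))
        (fun σ : Fin (m + 2) → n => if σ 0 = i ∧ σ (Fin.last (m + 1)) = j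
          then walkWeight (fun a b => W a b) β (List.ofFn σ) else 0)]
      rw [Fintype.sum_prod_type]
      have hterm : ∀ (v : n) (τ : Fin (m + 1) → n),
          (if (Fin.consEquiv (fun _ : Fin (m + 2) => n)) (v, τ) 0 = i
              ∧ (Fin.consEquiv (fun _ : Fin (m + 2) => n)) (v, τ) (Fin.last (m + 1)) = j
            then walkWeight (fun a b => W a b) β
              (List.ofFn ((Fin.consEquiv (fun _ : Fin (m + 2) => n)) (v, τ))) else 0)
          = if v = i ∧ τ (Fin.last m) = j
              then W v (τ 0) / (2 * β v) * walkWeight (fun a b => W a b) β (List.ofFn τ)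
            else 0 := by
        intro v τ
        have hc0 : (Fin.consEquiv (fun _ : Fin (m + 2) => n)) (v, τ) = Fin.cons v τ := rfl
        have hlast : (Fin.cons v τ : Fin (m + 2) → n) (Fin.last (m + 1)) = τ (Fin.last m) := by
          rw [← Fin.succ_last, Fin.cons_succ]
        have hofn : List.ofFn (Fin.cons v τ : Fin (m + 2) → n)
            = v :: List.ofFn τ := by
          rw [List.ofFn_succ]
          simp [Fin.cons_zero, Fin.cons_succ]
        have hww : walkWeight (fun a b => W a b) β (List.ofFn (Fin.cons v τ : Fin (m + 2) → n))
            = W v (τ 0) / (2 * β v) * walkWeight (fun a b => W a b) β (List.ofFn τ) := by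
          rw [hofn, List.ofFn_succ (f := τ), ww_cons, ← List.ofFn_succ (f := τ)]
        rw [hc0, hww, hlast, Fin.cons_zero]
      rw [Finset.sum_congr rfl fun v _ => Finset.sum_congr rfl fun τ _ => hterm v τ]
      rw [Finset.sum_comm]
      have hlhs : ∀ τ : Fin (m + 1) → n,
          (∑ v, if v = i ∧ τ (Fin.last m) = j
            then W v (τ 0) / (2 * β v) * walkWeight (fun a b => W a b) β (List.ofFn τ) else 0)
          = if τ (Fin.last m) = j
              then W i (τ 0) / (2 * β i) * walkWeight (fun a b => W a b) β (List.ofFn τ)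
            else 0 := fun τ => sum_ite_and_left _ i
      rw [Finset.sum_congr rfl fun τ _ => hlhs τ]
      -- now RHS side
      have hrhs2 : ∀ v : n, (Ktil W β i v * ∑ σ : Fin (m + 1) → n,
            if σ 0 = v ∧ σ (Fin.last m) = j
              then walkWeight (fun a b => W a b) β (List.ofFn σ) else 0)
          = ∑ τ : Fin (m + 1) → n, if τ 0 = v ∧ τ (Fin.last m) = j
              then Ktil W β i v * walkWeight (fun a b => W a b) β (List.ofFn τ) else 0 := by
        intro v
        rw [Finset.mul_sum]
        exact Finset.sum_congr rfl fun τ _ => by rw [mul_ite, mul_zero]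
      rw [Finset.sum_congr rfl fun v _ => hrhs2 v, Finset.sum_comm]
      refine Finset.sum_congr rfl fun τ _ => ?_
      have e : ∀ v, (if τ 0 = v ∧ τ (Fin.last m) = j
          then Ktil W β i v * walkWeight (fun a b => W a b) β (List.ofFn τ) else 0)
          = if τ 0 = v ∧ τ (Fin.last m) = j
              then (fun u => Ktil W β i u * walkWeight (fun a b => W a b) β (List.ofFn τ)) v
            else 0 := fun v => rfl
      rw [Finset.sum_congr rfl fun v _ => e v, sum_ite_and_right]
      have hK : Ktil W β i (τ 0) = (2 * β i)⁻¹ * W i (τ 0) := by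
        unfold Ktil Dinv
        rw [Matrix.diagonal_mul]
      rw [hK]
      by_cases hj : τ (Fin.last m) = j <;> simp [hj, div_eq_inv_mul]

lemma hasSum_Fsum (W : Matrix n n ℝ) (hsymm : W.IsSymm) (hnn : ∀ a b, 0 ≤ W a b)
    (hdiag : ∀ v, W v v = 0) (β : n → ℝ) (hβ : (Hmat W β).PosDef) (i j : n) :
    HasSum (fun m => Fsum W β j m i) ((Hmat W β)⁻¹ i j) := by
  have hb : ∀ v, 0 < β v := beta_pos hdiag hβ
  have hbne : ∀ v, (2 * β v) ≠ 0 := fun v => by have := hb v; positivity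
  have hWh : Wᴴ = W := by
    rw [conjTranspose_eq_transpose_of_trivial]; exact hsymm
  set D : Matrix n n ℝ := diagonal (fun v => 2 * β v) with hD
  have hDDinv : D * Dinv β = 1 := by
    rw [hD]; unfold Dinv
    rw [Matrix.diagonal_mul_diagonal]
    rw [show (fun v => (2 * β v) * (2 * β v)⁻¹) = fun _ => (1 : ℝ) from
      funext fun v => mul_inv_cancel₀ (hbne v)]
    exact Matrix.diagonal_one
  have hDinvD : Dinv β * D = 1 := by
    rw [hD]; unfold Dinv
    rw [Matrix.diagonal_mul_diagonal]
    rw [show (fun v => (2 * β v)⁻¹ * (2 * β v)) = fun _ => (1 : ℝ) from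
      funext fun v => inv_mul_cancel₀ (hbne v)]
    exact Matrix.diagonal_one
  have hH : Hmat W β = D * (1 - Ktil W β) := by
    rw [hmat_eq]
    unfold Ktil
    rw [Matrix.mul_sub, Matrix.mul_one, ← Matrix.mul_assoc, hDDinv, Matrix.one_mul, hD]
  have hdet : IsUnit (Hmat W β).det := isUnit_iff_ne_zero.mpr hβ.det_pos.ne'
  have hSN : ∀ N, (∑ m ∈ Finset.range N, (Ktil W β) ^ m) * Dinv β
      = (Hmat W β)⁻¹ - (Ktil W β) ^ N * (Hmat W β)⁻¹ := by
    intro N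
    have hgeom : (∑ m ∈ Finset.range N, (Ktil W β) ^ m) * (1 - Ktil W β)
        = 1 - (Ktil W β) ^ N := by
      have hg := geom_sum_mul (Ktil W β) N
      have : (∑ m ∈ Finset.range N, (Ktil W β) ^ m) * (1 - Ktil W β)
          = -((∑ m ∈ Finset.range N, (Ktil W β) ^ m) * (Ktil W β - 1)) := by
        noncomm_ring
      rw [this, hg, neg_sub]
    have h2 : ((∑ m ∈ Finset.range N, (Ktil W β) ^ m) * Dinv β) * Hmat W β
        = 1 - (Ktil W β) ^ N := by
      rw [hH, show ((∑ m ∈ Finset.range N, (Ktil W β) ^ m) * Dinv β) * (D * (1 - Ktil W β))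
          = (∑ m ∈ Finset.range N, (Ktil W β) ^ m) * (Dinv β * D) * (1 - Ktil W β) from by
        simp only [Matrix.mul_assoc], hDinvD, Matrix.mul_one, hgeom]
    calc (∑ m ∈ Finset.range N, (Ktil W β) ^ m) * Dinv β
        = (∑ m ∈ Finset.range N, (Ktil W β) ^ m) * Dinv β * (Hmat W β * (Hmat W β)⁻¹) := by
          rw [Matrix.mul_nonsing_inv _ hdet, Matrix.mul_one]
      _ = ((∑ m ∈ Finset.range N, (Ktil W β) ^ m) * Dinv β * Hmat W β) * (Hmat W β)⁻¹ := by
          simp only [Matrix.mul_assoc]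
      _ = (1 - (Ktil W β) ^ N) * (Hmat W β)⁻¹ := by rw [h2]
      _ = (Hmat W β)⁻¹ - (Ktil W β) ^ N * (Hmat W β)⁻¹ := by
          rw [Matrix.sub_mul, Matrix.one_mul]
  have hFnn : ∀ m, 0 ≤ Fsum W β j m i := by
    intro m
    apply Finset.sum_nonneg
    intro σ _
    split
    · exact ww_nonneg _ _ hnn hb _
    · exact le_rfl
  rw [hasSum_iff_tendsto_nat_of_nonneg hFnn]
  have hps : ∀ N, (∑ m ∈ Finset.range N, Fsum W β j m i)
      = (Hmat W β)⁻¹ i j - ((Ktil W β) ^ N * (Hmat W β)⁻¹) i j := by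
    intro N
    rw [Finset.sum_congr rfl fun m _ => Fsum_eq W β hb j m i]
    rw [show (∑ m ∈ Finset.range N, ((Ktil W β) ^ m * Dinv β) i j)
        = ((∑ m ∈ Finset.range N, (Ktil W β) ^ m) * Dinv β) i j from by
      rw [Finset.sum_mul, Matrix.sum_apply]]
    rw [hSN N, Matrix.sub_apply]
  simp only [hps]
  -- the correction term tends to zero
  set e : n → ℝ := fun v => Real.sqrt (2 * β v) with he_def
  have he : ∀ v, 0 < e v := fun v => Real.sqrt_pos.mpr (by have := hb v; linarith)
  have hee : ∀ v, e v * e v = 2 * β v := fun v =>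
    Real.mul_self_sqrt (by have := hb v; linarith)
  set E : Matrix n n ℝ := diagonal e with hE
  set Einv : Matrix n n ℝ := diagonal (fun v => (e v)⁻¹) with hEinv
  have hEinvE : Einv * E = 1 := by
    rw [hEinv, hE, Matrix.diagonal_mul_diagonal,
      show (fun v => (e v)⁻¹ * e v) = fun _ => (1 : ℝ) from
        funext fun v => inv_mul_cancel₀ (he v).ne']
    exact Matrix.diagonal_one
  have hEEinv : E * Einv = 1 := by
    rw [hEinv, hE, Matrix.diagonal_mul_diagonal,
      show (fun v => e v * (e v)⁻¹) = fun _ => (1 : ℝ) from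
        funext fun v => mul_inv_cancel₀ (he v).ne']
    exact Matrix.diagonal_one
  have hEinvEinv : Einv * Einv = Dinv β := by
    rw [hEinv]
    unfold Dinv
    rw [Matrix.diagonal_mul_diagonal,
      show (fun v => (e v)⁻¹ * (e v)⁻¹) = fun v => (2 * β v)⁻¹ from
        funext fun v => by rw [← mul_inv, hee]]
  set M : Matrix n n ℝ := Einv * W * Einv with hMdef
  have hMK : Einv * M * E = Ktil W β := by
    rw [hMdef]
    calc Einv * (Einv * W * Einv) * E = (Einv * Einv) * W * (Einv * E) := by
          simp only [Matrix.mul_assoc]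
      _ = Dinv β * W * 1 := by rw [hEinvEinv, hEinvE]
      _ = Ktil W β := by rw [Matrix.mul_one]; rfl
  have hKpow : ∀ N, (Ktil W β) ^ N = Einv * M ^ N * E := fun N => by
    rw [← hMK, mul_eq_one_pow_conj hEEinv hEinvE]
  have hMherm : M.IsHermitian := by
    show _ = _
    rw [hMdef, conjTranspose_mul, conjTranspose_mul, hWh, hEinv, diagonal_conjTranspose,
      star_trivial, Matrix.mul_assoc]
  have hEDE : Einv * D * Einv = 1 := by
    rw [hEinv, hD, Matrix.diagonal_mul_diagonal, Matrix.diagonal_mul_diagonal]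
    rw [show (fun v => (e v)⁻¹ * (2 * β v) * (e v)⁻¹) = fun _ => (1 : ℝ) from
      funext fun v => by rw [← hee v]; field_simp [(he v).ne']]
    exact Matrix.diagonal_one
  have h1M : (1 - M).PosDef := by
    have : Einv * Hmat W β * Einv = 1 - M := by
      rw [hmat_eq, ← hD, Matrix.mul_sub, Matrix.sub_mul, hEDE, hMdef]
    rw [← this, hEinv]
    exact posdef_conj hβ _ (fun v => inv_ne_zero (he v).ne')
  have h2M : (1 + M).PosDef := by
    have : Einv * (diagonal (fun v => 2 * β v) + W) * Einv = 1 + M := by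
      rw [Matrix.mul_add, Matrix.add_mul, ← hD, hEDE, hMdef]
    rw [← this, hEinv]
    exact posdef_conj (posdef_plus hsymm hnn hβ) _ (fun v => inv_ne_zero (he v).ne')
  have hcor : Tendsto (fun N => ((Ktil W β) ^ N * (Hmat W β)⁻¹) i j) atTop (nhds 0) := by
    have hform : ∀ N, ((Ktil W β) ^ N * (Hmat W β)⁻¹) i j
        = ∑ a, (e i)⁻¹ * (M ^ N) i a * e a * (Hmat W β)⁻¹ a j := by
      intro N
      rw [hKpow N, Matrix.mul_apply]
      refine Finset.sum_congr rfl fun a _ => ?_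
      rw [show Einv * M ^ N * E = Einv * M ^ N * E from rfl]
      rw [Matrix.mul_diagonal, Matrix.diagonal_mul]
    simp only [hform]
    have : Tendsto (fun N => ∑ a, (e i)⁻¹ * (M ^ N) i a * e a * (Hmat W β)⁻¹ a j) atTop
        (nhds (∑ a : n, 0)) := by
      refine tendsto_finset_sum _ fun a _ => ?_
      have h := (tendsto_pow_entry M hMherm h1M h2M i a).const_mul ((e i)⁻¹)
      have h2 := (h.mul_const (e a)).mul_const ((Hmat W β)⁻¹ a j)
      simpa using h2
    simpa using this
  have hfinal : Tendsto (fun N : ℕ => (Hmat W β)⁻¹ i j - ((Ktil W β) ^ N * (Hmat W β)⁻¹) i j)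
      atTop (nhds ((Hmat W β)⁻¹ i j - 0)) := tendsto_const_nhds.sub hcor
  simpa using hfinal


theorem key (W : Matrix n n ℝ) (hsymm : W.IsSymm) (hnn : ∀ a b : n, 0 ≤ W a b)
    (hdiag : ∀ v, W v v = 0) (β : n → ℝ) (hβ : (Hmat W β).PosDef) (i j : n) :
    ∑' σ : {l : List n // IsWalkBtw (fun a b => W a b) i j l},
        ENNReal.ofReal (walkWeight (fun a b => W a b) β σ.1)
      = ENNReal.ofReal ((Hmat W β)⁻¹ i j) := by
  classical
  have hb : ∀ v, 0 < β v := beta_pos hdiag hβ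
  set f : List n → ENNReal := fun l =>
    if l.head? = some i ∧ l.getLast? = some j
      then ENNReal.ofReal (walkWeight (fun a b => W a b) β l) else 0 with hf
  have hA : ∑' σ : {l : List n // IsWalkBtw (fun a b => W a b) i j l},
      ENNReal.ofReal (walkWeight (fun a b => W a b) β σ.1) = ∑' l : List n, f l := by
    rw [show (∑' σ : {l : List n // IsWalkBtw (fun a b => W a b) i j l},
          ENNReal.ofReal (walkWeight (fun a b => W a b) β σ.1))
        = ∑' x : ↑{l : List n | IsWalkBtw (fun a b => W a b) i j l},
          ENNReal.ofReal (walkWeight (fun a b => W a b) β x.1) from rfl]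
    rw [tsum_subtype {l : List n | IsWalkBtw (fun a b => W a b) i j l}
      (fun l => ENNReal.ofReal (walkWeight (fun a b => W a b) β l))]
    congr 1
    funext l
    by_cases hw : IsWalkBtw (fun a b => W a b) i j l
    · rw [Set.indicator_of_mem (show l ∈ {l' : List n | IsWalkBtw (fun a b => W a b) i j l'} from hw), hf]
      simp only
      rw [if_pos ⟨hw.1, hw.2.1⟩]
    · rw [Set.indicator_of_notMem (show l ∉ {l' : List n | IsWalkBtw (fun a b => W a b) i j l'} from hw), hf]
      simp only
      by_cases hc : l.head? = some i ∧ l.getLast? = some j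
      · rw [if_pos hc]
        have hnc : ¬ l.Chain' (fun a b => 0 < W a b) := fun h => hw ⟨hc.1, hc.2, h⟩
        have h0 : walkWeight (fun a b => W a b) β l = 0 := by
          unfold walkWeight
          rw [prod_zero_of_not_chain (fun a b => W a b) hnn l hnc, zero_div]
        rw [h0, ENNReal.ofReal_zero]
      · rw [if_neg hc]
  rw [hA]
  have hC : ∑' l : List n, f l = ∑' k : ℕ, ∑' σ : Fin k → n, f (List.ofFn σ) := by
    rw [← Equiv.tsum_eq (List.equivSigmaTuple (α := n)).symm f, ENNReal.tsum_sigma']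
    rfl
  rw [hC]
  have hzero : ∑' σ : Fin 0 → n, f (List.ofFn σ) = 0 := by
    have : ∀ σ : Fin 0 → n, f (List.ofFn σ) = 0 := by
      intro σ
      rw [hf]
      simp
    simp only [this, tsum_zero]
  have hE : ∀ k : ℕ, ∑' σ : Fin (k + 1) → n, f (List.ofFn σ)
      = ENNReal.ofReal (Fsum W β j k i) := by
    intro k
    rw [tsum_fintype]
    unfold Fsum
    rw [ENNReal.ofReal_sum_of_nonneg (fun σ _ => by
      split
      · exact ww_nonneg _ _ hnn hb _
      · exact le_rfl)]
    refine Finset.sum_congr rfl fun σ _ => ?_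
    have hhead : (List.ofFn σ).head? = some (σ 0) := by
      rw [List.ofFn_succ]
      rfl
    have hne : List.ofFn σ ≠ [] := by
      rw [List.ofFn_succ]
      exact List.cons_ne_nil _ _
    have hlast : (List.ofFn σ).getLast? = some (σ (Fin.last k)) := by
      rw [List.getLast?_eq_getLast hne, List.getLast_ofFn_succ]
    rw [hf]
    simp only [hhead, hlast]
    by_cases hcond : σ 0 = i ∧ σ (Fin.last k) = j
    · rw [if_pos ⟨by rw [hcond.1], by rw [hcond.2]⟩, if_pos hcond]
    · rw [if_neg (fun h => hcond ⟨Option.some_injective _ h.1, Option.some_injective _ h.2⟩),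
        if_neg hcond]
      exact ENNReal.ofReal_zero.symm
  rw [tsum_eq_zero_add' ENNReal.summable, hzero, zero_add]
  rw [show (fun k : ℕ => ∑' σ : Fin (k + 1) → n, f (List.ofFn σ))
      = fun k : ℕ => ENNReal.ofReal (Fsum W β j k i) from funext hE]
  have hsum := hasSum_Fsum W hsymm hnn hdiag β hβ i j
  rw [← ENNReal.ofReal_tsum_of_nonneg (fun m => by
      apply Finset.sum_nonneg
      intro σ _
      split
      · exact ww_nonneg _ _ hnn hb _
      · exact le_rfl) hsum.summable, hsum.tsum_eq]


lemma posdef_submatrix {m' : Type*} [Fintype m'] [DecidableEq m'] {A : Matrix n n ℝ}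
    (hA : A.PosDef) (g : m' → n) (hg : Function.Injective g) :
    (A.submatrix g g).PosDef := by
  refine posDef_iff_dotProduct_mulVec.mpr ⟨?_, ?_⟩
  · show _ = _
    rw [Matrix.conjTranspose_submatrix, hA.1]
  · intro x hx
    set y : n → ℝ := Function.extend g x 0 with hy
    have hyg : ∀ a, y (g a) = x a := fun a => hg.extend_apply x 0 a
    have hy0 : y ≠ 0 := by
      intro h
      apply hx
      funext a
      have h2 := congrFun h (g a)
      rw [hyg a] at h2
      exact h2
    have hsum : ∀ c : n → ℝ, (∑ u, c u * y u) = ∑ a, c (g a) * x a := by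
      intro c
      rw [← Finset.sum_subset (Finset.subset_univ (Finset.univ.image g))]
      · rw [Finset.sum_image (fun a _ b _ h => hg h)]
        exact Finset.sum_congr rfl fun a _ => by rw [hyg]
      · intro u _ hu
        have h0 : y u = 0 := by
          rw [hy]
          rw [Function.extend_apply' _ _ _ (by
            intro ⟨a, ha⟩
            exact hu (Finset.mem_image.mpr ⟨a, Finset.mem_univ a, ha⟩))]
          rfl
        rw [h0, mul_zero]
    have h := hA.dotProduct_mulVec_pos hy0
    rw [star_trivial] at h ⊢
    have key1 : x ⬝ᵥ (A.submatrix g g *ᵥ x) = ∑ a, (∑ b, A (g a) (g b) * x b) * x a := by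
      simp only [dotProduct, Matrix.mulVec, Matrix.submatrix_apply]
      exact Finset.sum_congr rfl fun a _ => by rw [mul_comm]
    have key2 : y ⬝ᵥ (A *ᵥ y) = ∑ a, (∑ b, A (g a) (g b) * x b) * x a := by
      have h1 : y ⬝ᵥ (A *ᵥ y) = ∑ u, (A *ᵥ y) u * y u :=
        Finset.sum_congr rfl fun u _ => mul_comm _ _
      rw [h1, hsum (fun u => (A *ᵥ y) u)]
      refine Finset.sum_congr rfl fun a _ => ?_
      congr 1
      show (A *ᵥ y) (g a) = ∑ b, A (g a) (g b) * x b
      simp only [Matrix.mulVec, dotProduct]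
      exact hsum (fun u => A (g a) u)
    rw [key1, ← key2]
    exact h

lemma hmat_submatrix {m' : Type*} [Fintype m'] [DecidableEq m'] (W : Matrix n n ℝ)
    (β : n → ℝ) (g : m' → n) (hg : Function.Injective g) :
    (Hmat W β).submatrix g g = Hmat (W.submatrix g g) (fun a => β (g a)) := by
  ext a b
  simp only [Hmat, Matrix.submatrix_apply, Matrix.sub_apply, Matrix.smul_apply,
    Matrix.diagonal_apply, hg.eq_iff]

lemma isWalk_map_iff {m' : Type*} (W : Matrix n n ℝ) (g : m' → n)
    (hg : Function.Injective g) (i' j' : m') (l : List m') :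
    IsWalkBtw (fun a b : m' => W (g a) (g b)) i' j' l ↔
      IsWalkBtw (fun a b => W a b) (g i') (g j') (l.map g) := by
  unfold IsWalkBtw
  unfold List.Chain'
  rw [List.head?_map, List.getLast?_map, List.isChain_map]
  constructor
  · rintro ⟨h1, h2, h3⟩
    exact ⟨by rw [h1]; rfl, by rw [h2]; rfl, h3⟩
  · rintro ⟨h1, h2, h3⟩
    refine ⟨?_, ?_, h3⟩
    · rcases Option.map_eq_some_iff.mp h1 with ⟨a, ha, hga⟩
      rw [ha, hg hga]
    · rcases Option.map_eq_some_iff.mp h2 with ⟨a, ha, hga⟩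
      rw [ha, hg hga]

lemma pmap_map_val {V : Type*} (U : Finset V) (l : List V) (H : ∀ v ∈ l, v ∈ U) :
    (l.pmap (fun v hv => (⟨v, hv⟩ : ↥U)) H).map (fun a => a.1) = l := by
  rw [List.map_pmap]
  rw [show (fun (v : V) (hv : v ∈ U) => (⟨v, hv⟩ : ↥U).1) = fun v _ => id v from rfl]
  rw [List.pmap_eq_map, List.map_id]

def walkEquiv {V : Type*} [Fintype V] [DecidableEq V] (W : Matrix V V ℝ) (U : Finset V) (i j : V)
    (hi : i ∈ U) (hj : j ∈ U) :
    {l : List ↥U // IsWalkBtw (fun a b : ↥U => W a.1 b.1) ⟨i, hi⟩ ⟨j, hj⟩ l} ≃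
    {l : List V // IsWalkBtw (fun a b => W a b) i j l ∧ ∀ v ∈ l, v ∈ U} where
  toFun x := ⟨x.1.map (fun a => a.1), by
    refine ⟨(isWalk_map_iff W (fun a : ↥U => a.1) Subtype.val_injective ⟨i, hi⟩ ⟨j, hj⟩ x.1).mp x.2, ?_⟩
    intro v hv
    rcases List.mem_map.mp hv with ⟨a, _, rfl⟩
    exact a.2⟩
  invFun x := ⟨x.1.pmap (fun v hv => (⟨v, hv⟩ : ↥U)) x.2.2, by
    have hmap : (x.1.pmap (fun v hv => (⟨v, hv⟩ : ↥U)) x.2.2).map (fun a => a.1) = x.1 :=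
      pmap_map_val U x.1 x.2.2
    apply (isWalk_map_iff W (fun a : ↥U => a.1) Subtype.val_injective ⟨i, hi⟩ ⟨j, hj⟩ _).mpr
    rw [hmap]
    exact x.2.1⟩
  left_inv x := by
    apply Subtype.ext
    dsimp only
    have hinj : Function.Injective (List.map (fun a : ↥U => a.1)) :=
      List.map_injective_iff.mpr Subtype.val_injective
    apply hinj
    rw [pmap_map_val]
  right_inv x := by
    apply Subtype.ext
    dsimp only
    rw [pmap_map_val]



end WalkProof

theorem stmt9 {V : Type*} [Fintype V] [DecidableEq V] [Nonempty V]
    (W : Matrix V V ℝ) (hsymm : W.IsSymm) (hnn : ∀ i j, 0 ≤ W i j)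
    (hdiag : ∀ i, W i i = 0) (hconn : (graphOf W).Connected)
    (β : V → ℝ) (hβ : (Hmat W β).PosDef) :
    (∀ i j : V,
        ∑' σ : {l : List V // IsWalkBtw (fun a b => W a b) i j l},
            ENNReal.ofReal (walkWeight (fun a b => W a b) β σ.1)
          = ENNReal.ofReal ((Hmat W β)⁻¹ i j)) ∧
      ∀ U : Finset V, U.Nonempty → ∀ i j : V, ∀ hi : i ∈ U, ∀ hj : j ∈ U,
        ((Hmat W β).submatrix (fun a : ↥U => a.1) (fun a : ↥U => a.1)).PosDef ∧
        ∑' σ : {l : List V // IsWalkBtw (fun a b => W a b) i j l ∧ ∀ v ∈ l, v ∈ U},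
            ENNReal.ofReal (walkWeight (fun a b => W a b) β σ.1)
          = ENNReal.ofReal
              (((Hmat W β).submatrix (fun a : ↥U => a.1) (fun a : ↥U => a.1))⁻¹ ⟨i, hi⟩ ⟨j, hj⟩) := by
  constructor
  · intro i j
    exact WalkProof.key W hsymm hnn hdiag β hβ i j
  · intro U _hU i j hi hj
    have hg : Function.Injective (fun a : ↥U => a.1) := Subtype.val_injective
    have hposU : ((Hmat W β).submatrix (fun a : ↥U => a.1) (fun a : ↥U => a.1)).PosDef :=
      WalkProof.posdef_submatrix hβ _ hg
    refine ⟨hposU, ?_⟩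
    have hHU : (Hmat W β).submatrix (fun a : ↥U => a.1) (fun a : ↥U => a.1)
        = Hmat (W.submatrix (fun a : ↥U => a.1) (fun a : ↥U => a.1)) (fun a : ↥U => β a.1) :=
      WalkProof.hmat_submatrix W β _ hg
    have hWsymm' : (W.submatrix (fun a : ↥U => a.1) (fun a : ↥U => a.1)).IsSymm := by
      unfold Matrix.IsSymm
      rw [Matrix.transpose_submatrix, hsymm]
    have hposU' : (Hmat (W.submatrix (fun a : ↥U => a.1) (fun a : ↥U => a.1))
        (fun a : ↥U => β a.1)).PosDef := hHU ▸ hposU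
    have hkey := WalkProof.key (W.submatrix (fun a : ↥U => a.1) (fun a : ↥U => a.1))
      hWsymm' (fun a b => hnn a.1 b.1) (fun a => hdiag a.1) (fun a : ↥U => β a.1) hposU'
      ⟨i, hi⟩ ⟨j, hj⟩
    rw [hHU]
    calc ∑' σ : {l : List V // IsWalkBtw (fun a b => W a b) i j l ∧ ∀ v ∈ l, v ∈ U},
            ENNReal.ofReal (walkWeight (fun a b => W a b) β σ.1)
        = ∑' σ : {l : List ↥U // IsWalkBtw (fun a b : ↥U => W a.1 b.1) ⟨i, hi⟩ ⟨j, hj⟩ l},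
            ENNReal.ofReal (walkWeight (fun a b => W a b) β
              ((WalkProof.walkEquiv W U i j hi hj σ).1)) :=
          (Equiv.tsum_eq (WalkProof.walkEquiv W U i j hi hj) _).symm
      _ = ∑' σ : {l : List ↥U // IsWalkBtw (fun a b : ↥U => W a.1 b.1) ⟨i, hi⟩ ⟨j, hj⟩ l},
            ENNReal.ofReal (walkWeight (fun a b : ↥U => W a.1 b.1) (fun a : ↥U => β a.1) σ.1) := by
          congr 1
          funext σ
          congr 1
          exact (WalkProof.ww_map (fun a b : ↥U => W a.1 b.1) (fun a b => W a b)
            (fun a : ↥U => β a.1) β (fun a : ↥U => a.1) (fun a b => rfl) (fun a => rfl)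
            σ.1).symm
      _ = ENNReal.ofReal ((Hmat (W.submatrix (fun a : ↥U => a.1) (fun a : ↥U => a.1))
            (fun a : ↥U => β a.1))⁻¹ ⟨i, hi⟩ ⟨j, hj⟩) := hkey


end
end

section
/- For every real λ ≥ 0: ∫_0^∞ (1/√(πu))·e^{−u}·e^{−λ/(2u)} du = e^{−√(2λ)}. -/
open MeasureTheory Set Real

lemma aux_cont (a : ℝ) : ContinuousOn (fun x : ℝ => Real.exp (-(x - a / x) ^ 2)) (Set.Ioi 0) := by
  apply ContinuousOn.rexp
  apply ContinuousOn.neg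
  apply ContinuousOn.pow
  exact continuousOn_id.sub (continuousOn_const.div continuousOn_id fun x hx => ne_of_gt hx)

lemma aux_intK {a : ℝ} (ha : 0 < a) :
    IntegrableOn (fun x : ℝ => Real.exp (-(x - a / x) ^ 2)) (Set.Ioi 0) := by
  apply Integrable.mono' (g := fun x : ℝ => Real.exp (2 * a) * Real.exp (-1 * x ^ 2))
  · exact (integrable_exp_neg_mul_sq one_pos).integrableOn.const_mul _
  · exact ((aux_cont a).aestronglyMeasurable measurableSet_Ioi)
  · filter_upwards [MeasureTheory.ae_restrict_mem measurableSet_Ioi] with x hx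
    have hx0 : (0 : ℝ) < x := hx
    rw [Real.norm_eq_abs, abs_of_pos (Real.exp_pos _), ← Real.exp_add]
    apply Real.exp_le_exp.2
    have h1 : 0 ≤ (a / x) ^ 2 := sq_nonneg _
    have h2 : x * (a / x) = a := by field_simp
    nlinarith [sq_nonneg (x - a / x)]

lemma aux_key {a x : ℝ} (hx : x ≠ 0) :
    Real.exp (-(x - a / x) ^ 2) = Real.exp (2 * a) * Real.exp (-x ^ 2) * Real.exp (-(a / x) ^ 2) := by
  rw [← Real.exp_add, ← Real.exp_add]
  congr 1
  field_simp
  ring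

lemma aux_intL {a : ℝ} (ha : 0 < a) :
    IntegrableOn (fun x : ℝ => a / x ^ 2 * Real.exp (-(x - a / x) ^ 2)) (Set.Ioi 0) := by
  apply Integrable.mono'
      (g := fun x : ℝ => (Real.exp (2 * a) / a) * Real.exp (-1 * x ^ 2))
  · exact (integrable_exp_neg_mul_sq one_pos).integrableOn.const_mul _
  · apply ContinuousOn.aestronglyMeasurable _ measurableSet_Ioi
    apply ContinuousOn.mul _ (aux_cont a)
    exact continuousOn_const.div (continuousOn_pow 2) fun x hx => ne_of_gt (pow_pos hx 2)
  · filter_upwards [MeasureTheory.ae_restrict_mem measurableSet_Ioi] with x hx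
    have hx0 : (0 : ℝ) < x := hx
    rw [Real.norm_eq_abs, abs_of_pos (mul_pos (div_pos ha (pow_pos hx0 2)) (Real.exp_pos _)),
      aux_key (ne_of_gt hx0)]
    have ht : 0 < (a / x) ^ 2 := by positivity
    have h2' : Real.exp (-(a / x) ^ 2) ≤ x ^ 2 / a ^ 2 := by
      have h := Real.add_one_le_exp ((a / x) ^ 2)
      calc Real.exp (-(a / x) ^ 2) = (Real.exp ((a / x) ^ 2))⁻¹ := by rw [Real.exp_neg]
        _ ≤ ((a / x) ^ 2)⁻¹ := by
            apply inv_anti₀ ht; linarith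
        _ = x ^ 2 / a ^ 2 := by rw [div_pow, inv_div]
    have h3 : a / x ^ 2 * Real.exp (-(a / x) ^ 2) ≤ 1 / a := by
      calc a / x ^ 2 * Real.exp (-(a / x) ^ 2) ≤ a / x ^ 2 * (x ^ 2 / a ^ 2) := by
            apply mul_le_mul_of_nonneg_left h2' (by positivity)
        _ = 1 / a := by field_simp
    calc a / x ^ 2 * (Real.exp (2 * a) * Real.exp (-x ^ 2) * Real.exp (-(a / x) ^ 2))
        = (Real.exp (2 * a) * Real.exp (-x ^ 2)) * (a / x ^ 2 * Real.exp (-(a / x) ^ 2)) := by ring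
      _ ≤ (Real.exp (2 * a) * Real.exp (-x ^ 2)) * (1 / a) := by
          apply mul_le_mul_of_nonneg_left h3 (by positivity)
      _ = Real.exp (2 * a) / a * Real.exp (-1 * x ^ 2) := by rw [neg_one_mul]; ring

lemma aux_image_inv {a : ℝ} (ha : 0 < a) : (fun x : ℝ => a / x) '' Set.Ioi 0 = Set.Ioi 0 := by
  ext y
  constructor
  · rintro ⟨x, hx, rfl⟩
    exact div_pos ha hx
  · intro hy
    exact ⟨a / y, div_pos ha hy, by field_simp⟩

lemma aux_sub1 {a : ℝ} (ha : 0 < a) :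
    ∫ x in Set.Ioi (0 : ℝ), Real.exp (-(x - a / x) ^ 2)
      = ∫ x in Set.Ioi (0 : ℝ), a / x ^ 2 * Real.exp (-(x - a / x) ^ 2) := by
  have h := integral_image_eq_integral_abs_deriv_smul (f := fun x : ℝ => a / x)
    (f' := fun x : ℝ => -(a / x ^ 2)) measurableSet_Ioi
    (fun x hx => by
      have hx0 : (0 : ℝ) < x := hx
      have : HasDerivAt (fun x : ℝ => a / x) (-(a / x ^ 2)) x := by
        simpa [div_eq_mul_inv, sq] using ((hasDerivAt_inv (ne_of_gt hx0)).const_mul a)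
      exact this.hasDerivWithinAt)
    (fun x hx y hy hxy => by
      have hx0 : (0 : ℝ) < x := hx
      have hy0 : (0 : ℝ) < y := hy
      field_simp at hxy
      exact hxy.symm)
    (fun x => Real.exp (-(x - a / x) ^ 2))
  rw [aux_image_inv ha] at h
  rw [h]
  apply setIntegral_congr_fun measurableSet_Ioi
  intro x hx
  have hx0 : (0 : ℝ) < x := hx
  have h1 : a / (a / x) = x := by field_simp
  have h2 : |(-(a / x ^ 2))| = a / x ^ 2 := by rw [abs_neg, abs_of_pos (by positivity)]
  simp only [smul_eq_mul, h1, h2]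
  congr 2
  ring

lemma aux_image_phi {a : ℝ} (ha : 0 < a) :
    (fun x : ℝ => x - a / x) '' Set.Ioi 0 = Set.univ := by
  apply Set.eq_univ_of_forall
  intro y
  have hsq : (0 : ℝ) ≤ y ^ 2 + 4 * a := by nlinarith
  have hs : Real.sqrt (y ^ 2 + 4 * a) ^ 2 = y ^ 2 + 4 * a := Real.sq_sqrt hsq
  have habs : |y| < Real.sqrt (y ^ 2 + 4 * a) := by
    rw [← Real.sqrt_sq_eq_abs]
    exact Real.sqrt_lt_sqrt (sq_nonneg _) (by nlinarith [sq_abs y])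
  have hxpos : 0 < (y + Real.sqrt (y ^ 2 + 4 * a)) / 2 := by
    have := neg_abs_le y
    linarith
  refine ⟨(y + Real.sqrt (y ^ 2 + 4 * a)) / 2, hxpos, ?_⟩
  set x := (y + Real.sqrt (y ^ 2 + 4 * a)) / 2 with hxdef
  have hroot : x ^ 2 - y * x - a = 0 := by
    rw [hxdef]
    nlinarith [hs]
  show x - a / x = y
  field_simp
  nlinarith [hroot]

lemma aux_sub2 {a : ℝ} (ha : 0 < a) :
    Real.sqrt Real.pi
      = ∫ x in Set.Ioi (0 : ℝ), (1 + a / x ^ 2) * Real.exp (-(x - a / x) ^ 2) := by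
  have h := integral_image_eq_integral_abs_deriv_smul (f := fun x : ℝ => x - a / x)
    (f' := fun x : ℝ => 1 + a / x ^ 2) measurableSet_Ioi
    (fun x hx => by
      have hx0 : (0 : ℝ) < x := hx
      have : HasDerivAt (fun x : ℝ => x - a / x) (1 - -(a / x ^ 2)) x := by
        apply (hasDerivAt_id x).sub
        have h' : HasDerivAt (fun x : ℝ => a / x) (-(a / x ^ 2)) x := by
          simpa [div_eq_mul_inv, sq] using ((hasDerivAt_inv (ne_of_gt hx0)).const_mul a)
        exact h'
      simpa [sub_neg_eq_add] using this.hasDerivWithinAt)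
    (fun x hx y hy hxy => by
      have hx0 : (0 : ℝ) < x := hx
      have hy0 : (0 : ℝ) < y := hy
      simp only at hxy
      field_simp at hxy
      nlinarith [hxy, mul_pos hx0 hy0])
    (fun y => Real.exp (-y ^ 2))
  rw [aux_image_phi ha, MeasureTheory.setIntegral_univ] at h
  have hg : ∫ y : ℝ, Real.exp (-y ^ 2) = Real.sqrt Real.pi := by
    have := integral_gaussian (1 : ℝ)
    simpa using this
  rw [← hg, h]
  apply setIntegral_congr_fun measurableSet_Ioi
  intro x hx
  have hx0 : (0 : ℝ) < x := hx
  have : |1 + a / x ^ 2| = 1 + a / x ^ 2 := abs_of_pos (by positivity)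
  simp only [smul_eq_mul, this]

lemma glasser {a : ℝ} (ha : 0 ≤ a) :
    ∫ x in Set.Ioi (0 : ℝ), Real.exp (-(x - a / x) ^ 2) = Real.sqrt Real.pi / 2 := by
  rcases eq_or_lt_of_le ha with rfl | ha
  · have h : ∀ x ∈ Set.Ioi (0 : ℝ), Real.exp (-(x - 0 / x) ^ 2) = Real.exp (-1 * x ^ 2) := by
      intro x hx; norm_num
    rw [setIntegral_congr_fun measurableSet_Ioi h, integral_gaussian_Ioi]
    norm_num
  · have hsplit : ∫ x in Set.Ioi (0 : ℝ), (1 + a / x ^ 2) * Real.exp (-(x - a / x) ^ 2)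
        = (∫ x in Set.Ioi (0 : ℝ), Real.exp (-(x - a / x) ^ 2))
          + ∫ x in Set.Ioi (0 : ℝ), a / x ^ 2 * Real.exp (-(x - a / x) ^ 2) := by
      rw [← integral_add (aux_intK ha) (aux_intL ha)]
      congr 1
      ext x
      ring
    have h2 := aux_sub2 ha
    rw [hsplit, ← aux_sub1 ha] at h2
    linarith

lemma aux_image_sq : (fun x : ℝ => x ^ 2) '' Set.Ioi 0 = Set.Ioi 0 := by
  ext y
  constructor
  · rintro ⟨x, hx, rfl⟩
    exact pow_pos (show (0 : ℝ) < x from hx) 2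
  · intro hy
    exact ⟨Real.sqrt y, Real.sqrt_pos.2 hy, Real.sq_sqrt (le_of_lt hy)⟩

theorem stmt15 (l : ℝ) (hl : 0 ≤ l) :
    ∫ u in Set.Ioi (0 : ℝ),
        (1 / Real.sqrt (Real.pi * u)) * Real.exp (-u) * Real.exp (-(l / (2 * u)))
      = Real.exp (-Real.sqrt (2 * l)) := by
  set a : ℝ := Real.sqrt (l / 2) with ha_def
  have ha : 0 ≤ a := Real.sqrt_nonneg _
  have ha2 : a ^ 2 = l / 2 := Real.sq_sqrt (by linarith)
  have h2a : Real.sqrt (2 * l) = 2 * a := by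
    have h4 : (2 * a) ^ 2 = 2 * l := by rw [mul_pow, ha2]; ring
    rw [← h4, Real.sqrt_sq (by linarith)]
  have hsub := integral_image_eq_integral_abs_deriv_smul (f := fun x : ℝ => x ^ 2)
    (f' := fun x : ℝ => 2 * x) measurableSet_Ioi
    (fun x hx => by
      simpa [mul_comm] using (hasDerivAt_pow 2 x).hasDerivWithinAt)
    (fun x hx y hy hxy => by
      have hx0 : (0 : ℝ) < x := hx
      have hy0 : (0 : ℝ) < y := hy
      have hxy' : x ^ 2 = y ^ 2 := hxy
      nlinarith [hxy'])
    (fun u => (1 / Real.sqrt (Real.pi * u)) * Real.exp (-u) * Real.exp (-(l / (2 * u))))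
  rw [aux_image_sq] at hsub
  rw [hsub]
  have heq : ∀ x ∈ Set.Ioi (0 : ℝ),
      |2 * x| • ((1 / Real.sqrt (Real.pi * x ^ 2)) * Real.exp (-x ^ 2)
        * Real.exp (-(l / (2 * x ^ 2))))
      = (2 / Real.sqrt Real.pi * Real.exp (-(2 * a))) * Real.exp (-(x - a / x) ^ 2) := by
    intro x hx
    have hx0 : (0 : ℝ) < x := hx
    have hsq : Real.sqrt (Real.pi * x ^ 2) = Real.sqrt Real.pi * x := by
      rw [Real.sqrt_mul Real.pi_pos.le, Real.sqrt_sq hx0.le]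
    have habs : |2 * x| = 2 * x := abs_of_pos (by positivity)
    have hl2 : l / (2 * x ^ 2) = a ^ 2 / x ^ 2 := by rw [ha2]; ring
    rw [smul_eq_mul, habs, hsq, hl2]
    rw [aux_key (ne_of_gt hx0)]
    have hpi : Real.sqrt Real.pi ≠ 0 := by positivity
    have hdp : (a / x) ^ 2 = a ^ 2 / x ^ 2 := div_pow a x 2
    rw [hdp, Real.exp_neg (2 * a)]
    field_simp
  rw [setIntegral_congr_fun measurableSet_Ioi heq, MeasureTheory.integral_const_mul,
    glasser ha, h2a]
  have hpi : Real.sqrt Real.pi ≠ 0 := by positivity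
  field_simp
end
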